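/- Let G=(V,E,I,{s,t}) be an inner Eulerian grapht with |E|≤ℵ₀ in which s is linked. Then there is a linkage 𝒫 of s such that there is a family of pairwise edge-disjoint cycles in G−E(𝒫) covering δ_{G−E(𝒫)}(t). -/

import Mathlib

/-! Common definitions: graphts (multigraphs with terminals), walks, paths, cycles,
edge cuts, inner Eulerian graphts, path systems, linkages, Erdős–Menger cuts,
restriction (edge deletion) and contraction. -/

universe u v

/-- A *grapht*: a multigraph (no loops, parallel edges allowed) given by an incidence
function `I : E → Sym2 V`, together with a set `T` of at least two terminal vertices. -/
structure Grapht (V : Type u) (E : Type v) where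
  I : E → Sym2 V
  loopless : ∀ e : E, ¬ (I e).IsDiag
  T : Set V
  T_nontrivial : T.Nontrivial

namespace Grapht

variable {V : Type u} {E : Type v}

/-- `G.IsWalk vs es` holds when `vs` is the vertex sequence and `es` the edge sequence
of a walk in `G`. -/
inductive IsWalk (G : Grapht V E) : List V → List E → Prop
  | nil (v : V) : IsWalk G [v] []
  | cons {u w : V} {vs : List V} {e : E} {es : List E} :
      G.I e = s(u, w) → IsWalk G (w :: vs) es → IsWalk G (u :: w :: vs) (e :: es)

/-- A finite path in the grapht `G` (no repeated vertices), with endpoints `first`, `last`. -/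
structure Path (G : Grapht V E) where
  first : V
  last : V
  verts : List V
  edges : List E
  isWalk : G.IsWalk verts edges
  nodup : verts.Nodup
  head_eq : verts.head? = some first
  getLast_eq : verts.getLast? = some last

/-- A finite cycle in the grapht `G`. -/
structure Cycle (G : Grapht V E) where
  verts : List V
  edges : List E
  isWalk : G.IsWalk verts edges
  closed : verts.head? = verts.getLast?
  nontrivial : edges ≠ []
  edges_nodup : edges.Nodup
  tail_nodup : verts.tail.Nodup

variable {G : Grapht V E}

/-- The internal (inner) vertices of a path. -/
def Path.inner (P : G.Path) : List V := (P.verts.drop 1).dropLast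

/-- The edge set of a path. -/
def Path.edgeSet (P : G.Path) : Set E := {e | e ∈ P.edges}

/-- The edge set of a cycle. -/
def Cycle.edgeSet (C : G.Cycle) : Set E := {e | e ∈ C.edges}

variable (G)

/-- `δ_G(X)`: the set of edges with exactly one endpoint in `X`. -/
def edgeCut (X : Set V) : Set E :=
  {e | ∃ u w, G.I e = s(u, w) ∧ u ∈ X ∧ w ∉ X}

/-- A grapht is *inner Eulerian* if there is no `X ⊆ V ∖ T` whose cut `δ(X)` is a
finite set of odd size. -/
def InnerEulerian : Prop :=
  ∀ X : Set V, Disjoint X G.T → ¬ ((G.edgeCut X).Finite ∧ Odd (G.edgeCut X).ncard)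

/-- An `AB`-path: a path with first vertex in `A`, last vertex in `B` and no internal
vertex in `A ∪ B`. -/
def IsABPath (A B : Set V) (P : G.Path) : Prop :=
  P.first ∈ A ∧ P.last ∈ B ∧ ∀ v ∈ P.inner, v ∉ A ∪ B

/-- A `T`-path: a path between two distinct terminal vertices without internal
terminal vertices. -/
def IsTPath (P : G.Path) : Prop :=
  P.first ∈ G.T ∧ P.last ∈ G.T ∧ P.first ≠ P.last ∧ ∀ v ∈ P.inner, v ∉ G.T

/-- A system of pairwise edge-disjoint paths. -/
def EdgeDisjoint (Ps : Set G.Path) : Prop :=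
  Ps.Pairwise fun P Q => ∀ e, e ∈ P.edges → e ∉ Q.edges

/-- A system of pairwise edge-disjoint `T`-paths. -/
def IsTPathSystem (Ps : Set G.Path) : Prop :=
  G.EdgeDisjoint Ps ∧ ∀ P ∈ Ps, G.IsTPath P

/-- The set of edges used by a path system. -/
def sysEdges (Ps : Set G.Path) : Set E := ⋃ P ∈ Ps, P.edgeSet

/-- `C` is *orthogonal* to the path system `Ps`: `C` consists of exactly one edge from
each path of `Ps`. -/
def Orthogonal (C : Set E) (Ps : Set G.Path) : Prop :=
  (∀ P ∈ Ps, ∃! e, e ∈ C ∧ e ∈ P.edges) ∧ ∀ e ∈ C, ∃ P ∈ Ps, e ∈ P.edges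

/-- `C` separates `A` and `B`: every `AB`-path meets `C` (i.e. `G − C` has no `AB`-path). -/
def Separates (C : Set E) (A B : Set V) : Prop :=
  ∀ P : G.Path, G.IsABPath A B P → ∃ e ∈ C, e ∈ P.edges

/-- An `AB`-cut. -/
def IsABCut (A B : Set V) (C : Set E) : Prop :=
  ∀ P : G.Path, G.IsABPath A B P → ∃ e ∈ C, e ∈ P.edges

/-- An Erdős–Menger `AB`-cut: an `AB`-cut orthogonal to some system of pairwise
edge-disjoint `AB`-paths. -/
def IsEMABCut (A B : Set V) (C : Set E) : Prop :=
  G.IsABCut A B C ∧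
    ∃ Ps : Set G.Path, G.EdgeDisjoint Ps ∧ (∀ P ∈ Ps, G.IsABPath A B P) ∧ G.Orthogonal C Ps

/-- The order `⊴` on (Erdős–Menger) `AB`-cuts: on every `AB`-path the first edge of `C`
comes no later than the first edge of `C'`. -/
def ABCutLE (A B : Set V) (C C' : Set E) : Prop :=
  ∀ P : G.Path, G.IsABPath A B P →
    ∀ i : Fin P.edges.length, P.edges.get i ∈ C' →
      ∃ j : Fin P.edges.length, (j : ℕ) ≤ (i : ℕ) ∧ P.edges.get j ∈ C

/-- `C` is the `⊴`-largest Erdős–Menger `AB`-cut. -/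
def IsLargestEMABCut (A B : Set V) (C : Set E) : Prop :=
  G.IsEMABCut A B C ∧ ∀ C', G.IsEMABCut A B C' → G.ABCutLE A B C' C

/-- A system `Ps` of pairwise edge-disjoint `T`-paths *links* the terminal `t`:
it covers `δ(t)`. -/
def Links (Ps : Set G.Path) (t : V) : Prop :=
  G.IsTPathSystem Ps ∧ ∀ e ∈ G.edgeCut {t}, ∃ P ∈ Ps, e ∈ P.edges

/-- The terminal `t` is linked. -/
def Linked (t : V) : Prop := ∃ Ps : Set G.Path, G.Links Ps t

/-- The linkability condition: every terminal is linked. -/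
def LinkabilityCondition : Prop := ∀ t ∈ G.T, G.Linked t

/-- A perfect linkage: a system of pairwise edge-disjoint `T`-paths linking every
terminal. -/
def IsPerfectLinkage (Ps : Set G.Path) : Prop :=
  G.IsTPathSystem Ps ∧ ∀ t ∈ G.T, ∀ e ∈ G.edgeCut {t}, ∃ P ∈ Ps, e ∈ P.edges

/-- In the two-terminal setting: a system of pairwise edge-disjoint `st`-paths
covering `δ(s)` (a linkage of `s`). -/
def IsStLinkage (s t : V) (Ps : Set G.Path) : Prop :=
  G.EdgeDisjoint Ps ∧ (∀ P ∈ Ps, G.IsABPath {s} {t} P) ∧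
    ∀ e ∈ G.edgeCut {s}, ∃ P ∈ Ps, e ∈ P.edges

/-- `s` is linked (two-terminal setting). -/
def StLinked (s t : V) : Prop := ∃ Ps : Set G.Path, G.IsStLinkage s t Ps

/-- `λ_G(A,B)`: the maximal number of pairwise edge-disjoint `AB`-paths. -/
noncomputable def lambda (A B : Set V) : ℕ :=
  sSup {n : ℕ | ∃ Ps : Set G.Path, G.EdgeDisjoint Ps ∧ (∀ P ∈ Ps, G.IsABPath A B P) ∧
    Ps.Finite ∧ Ps.ncard = n}

/-- The grapht obtained by deleting all edges outside `F`. -/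
def restrict (F : Set E) : Grapht V F where
  I e := G.I e.1
  loopless e := G.loopless e.1
  T := G.T
  T_nontrivial := G.T_nontrivial

/-- The map sending every vertex of a contracted set `X t` (`t ∈ T`) to `t`. -/
noncomputable def contractMap (X : V → Set V) : V → V := fun v =>
  letI := Classical.dec (∃ u ∈ G.T, v ∈ X u)
  if h : ∃ u ∈ G.T, v ∈ X u then h.choose else v

/-- The contraction `G/ℱ` of the family `ℱ = {X t : t ∈ T}`: each `X t` is contracted
to `t` and the arising loops are deleted. -/
noncomputable def contract (X : V → Set V) :
    Grapht V {e : E // ¬ ((G.I e).map (G.contractMap X)).IsDiag} where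
  I e := (G.I e.1).map (G.contractMap X)
  loopless e := e.2
  T := G.T
  T_nontrivial := G.T_nontrivial

end Grapht

/-!
Enumerate the edges `e₀, e₁, …` and build an increasing sequence of finite families of
committed `st`-paths and cycles, all pairwise edge-disjoint, keeping two invariants: no
committed cycle uses an edge at `s`, and `s` is still linked, by some linkage `L`, in `G` minus
the committed edges. At step `n` the edge `g = eₙ`, if it lies at `s` or `t` and is not
committed yet, gets committed. If `g` lies on a path of `L`, commit that path. Otherwise `g = ut`
lies at `t` only; let `X` be the set of vertices reachable from `u` along edges that are neither
committed nor on `L`, other than `g`. If `t ∈ X`, then `g` closes a cycle avoiding `s`. If a path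
`P` of `L` meets `X`, reroute it through `X` and `g` and commit the new path in place of `P`.
Otherwise `δ(X)` consists of `g` and committed edges; every committed path or cycle crosses
`δ(X)` an even number of times, so `δ(X)` is finite and odd, contradicting inner Eulerianity.
In the limit, the committed paths form the linkage and the committed cycles cover the remaining
edges at `t`.
-/

theorem List.even_countP_flatMap {α β : Type*} {p : β → Bool} {f : α → List β} {l : List α}
    (h : ∀ a ∈ l, Even ((f a).countP p)) : Even ((l.flatMap f).countP p) := by
  induction l with
  | nil => simp
  | cons a l ih =>
    rw [List.flatMap_cons, List.countP_append]
    exact (h a List.mem_cons_self).add (ih fun b hb => h b (List.mem_cons_of_mem _ hb))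

theorem List.Nodup.disjoint_of_flatMap {α β : Type*} {f : α → List β} {l : List α}
    (h : (l.flatMap f).Nodup) {a b : α} (ha : a ∈ l) (hb : b ∈ l) (hab : a ≠ b) :
    (f a).Disjoint (f b) :=
  have : Std.Symm (Function.onFun List.Disjoint f) := ⟨fun _ _ h => h.symm⟩
  (List.nodup_flatMap.1 h).2.forall ha hb hab

namespace Grapht

variable {V : Type u} {E : Type v} {G : Grapht V E}

lemma mem_edgeCut_iff {e : E} {u w : V} (hI : G.I e = s(u, w)) (X : Set V) :
    e ∈ G.edgeCut X ↔ ¬ (u ∈ X ↔ w ∈ X) := by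
  simp only [edgeCut, Set.mem_ofPred_eq, hI, Sym2.eq_iff]
  constructor
  · rintro ⟨a, b, (⟨rfl, rfl⟩ | ⟨rfl, rfl⟩), ha, hb⟩ <;> tauto
  · intro h
    by_cases hu : u ∈ X
    · exact ⟨u, w, Or.inl ⟨rfl, rfl⟩, hu, by tauto⟩
    · exact ⟨w, u, Or.inr ⟨rfl, rfl⟩, by tauto, hu⟩

lemma mem_edgeCut_singleton {e : E} {x : V} : e ∈ G.edgeCut {x} ↔ x ∈ G.I e := by
  obtain ⟨⟨u, w⟩, hI⟩ := Quot.exists_rep (G.I e)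
  have huw : u ≠ w := fun h => G.loopless e (by simp [← hI, h])
  rw [mem_edgeCut_iff hI.symm, ← hI, Sym2.mem_iff]
  simp only [Set.mem_singleton_iff]
  grind

namespace IsWalk

variable {vs : List V} {es : List E}

lemma mem_of_mem_I (h : G.IsWalk vs es) {e : E} (he : e ∈ es) {x : V} (hx : x ∈ G.I e) :
    x ∈ vs := by
  induction h with
  | nil v => simp at he
  | cons hI _ ih =>
    rcases List.mem_cons.1 he with rfl | he
    · rw [hI, Sym2.mem_iff] at hx
      rcases hx with rfl | rfl <;> simp
    · exact List.mem_cons_of_mem _ (ih he)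

lemma cons' {u w : V} {e : E} (hI : G.I e = s(u, w)) (h : G.IsWalk vs es)
    (hw : vs.head? = some w) : G.IsWalk (u :: vs) (e :: es) := by
  cases h with
  | nil v => obtain rfl := Option.some_inj.1 hw; exact .cons hI (.nil v)
  | cons h' hw' => obtain rfl := Option.some_inj.1 hw; exact .cons hI (.cons h' hw')

lemma append {vs' : List V} {es' : List E} (h : G.IsWalk vs es) (h' : G.IsWalk vs' es')
    (hjoin : vs.getLast? = vs'.head?) : G.IsWalk (vs ++ vs'.tail) (es ++ es') := by
  induction h with
  | nil v =>
    cases h' with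
    | nil w => obtain rfl := Option.some_inj.1 hjoin; exact .nil v
    | cons hI hw => obtain rfl := Option.some_inj.1 hjoin; exact .cons hI hw
  | cons hI _ ih => exact .cons hI (ih (by simpa using hjoin))

lemma reverse (h : G.IsWalk vs es) : G.IsWalk vs.reverse es.reverse := by
  induction h with
  | nil v => exact .nil v
  | @cons u w vs e es hI _ ih =>
    have hwu : G.IsWalk [w, u] [e] := .cons (by rw [hI, Sym2.eq_swap]) (.nil u)
    simpa using ih.append hwu (by simp)

lemma split {l₁ l₂ : List V} {v : V} (h : G.IsWalk vs es) (hvs : vs = l₁ ++ v :: l₂) :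
    ∃ es₁ es₂, es = es₁ ++ es₂ ∧ G.IsWalk (l₁ ++ [v]) es₁ ∧ G.IsWalk (v :: l₂) es₂ := by
  induction h generalizing l₁ with
  | nil w =>
    obtain ⟨rfl, rfl, rfl⟩ : l₁ = [] ∧ w = v ∧ l₂ = [] := by cases l₁ <;> simp_all
    exact ⟨[], [], rfl, .nil w, .nil w⟩
  | @cons u w vs e es hI hw ih =>
    cases l₁ with
    | nil =>
      obtain ⟨rfl, rfl⟩ := List.cons_eq_cons.1 hvs
      exact ⟨[], e :: es, rfl, .nil u, .cons hI hw⟩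
    | cons a l₁ =>
      simp only [List.cons_append, List.cons.injEq] at hvs
      obtain ⟨rfl, hvs⟩ := hvs
      obtain ⟨es₁, es₂, rfl, h₁, h₂⟩ := ih hvs
      refine ⟨e :: es₁, es₂, rfl, h₁.cons' hI ?_, h₂⟩
      cases l₁ <;> simp_all

lemma exists_nodup (h : G.IsWalk vs es) :
    ∃ vs' es', G.IsWalk vs' es' ∧ vs'.Nodup ∧ vs'.head? = vs.head? ∧
      vs'.getLast? = vs.getLast? ∧ es' ⊆ es := by
  induction h with
  | nil v => exact ⟨[v], [], .nil v, List.nodup_singleton v, rfl, rfl, List.nil_subset _⟩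
  | @cons u w vs e es hI hw ih =>
    obtain ⟨vs', es', h', hnd, hhead, hlast, hes⟩ := ih
    by_cases hu : u ∈ vs'
    · obtain ⟨l₁, l₂, rfl⟩ := List.append_of_mem hu
      obtain ⟨es₁, es₂, rfl, -, h₂⟩ := h'.split rfl
      refine ⟨u :: l₂, es₂, h₂, hnd.sublist (List.sublist_append_right _ _), rfl, ?_, ?_⟩
      · rw [List.getLast?_cons_cons, ← hlast, List.getLast?_append_of_ne_nil _ (by simp)]
      · exact fun x hx => List.mem_cons_of_mem _ (hes (List.mem_append_right _ hx))
    · refine ⟨u :: vs', e :: es', h'.cons' hI (by simpa using hhead),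
        List.nodup_cons.2 ⟨hu, hnd⟩, rfl, ?_, List.cons_subset_cons _ hes⟩
      obtain ⟨x, xs, rfl⟩ : ∃ x xs, vs' = x :: xs := by cases vs' <;> simp_all
      rw [List.getLast?_cons_cons, List.getLast?_cons_cons, hlast]

lemma exists_mem_I (h : G.IsWalk vs es) (hes : es ≠ []) {v : V} (hv : v ∈ vs) :
    ∃ e ∈ es, v ∈ G.I e := by
  induction h with
  | nil => exact absurd rfl hes
  | @cons u w vs e es hI hw ih =>
    rcases List.mem_cons.1 hv with rfl | hv
    · exact ⟨e, List.mem_cons_self, by simp [hI]⟩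
    · by_cases hes' : es = []
      · subst hes'
        cases hw
        obtain rfl := List.mem_singleton.1 hv
        exact ⟨e, List.mem_cons_self, by simp [hI]⟩
      · obtain ⟨e', he', hve'⟩ := ih hes' hv
        exact ⟨e', List.mem_cons_of_mem _ he', hve'⟩

lemma edges_nodup (h : G.IsWalk vs es) (hvs : vs.Nodup) : es.Nodup := by
  induction h with
  | nil => exact List.nodup_nil
  | cons hI hw ih =>
    have hnd := List.nodup_cons.1 hvs
    exact List.nodup_cons.2 ⟨fun he => hnd.1 (hw.mem_of_mem_I he (by simp [hI])), ih hnd.2⟩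

lemma head?_eq_of_mem_I {u : V} (h : G.IsWalk (u :: vs) es) (hnd : (u :: vs).Nodup)
    {e : E} (he : e ∈ es) (hu : u ∈ G.I e) : es.head? = some e := by
  cases h with
  | nil => simp at he
  | cons hI hw =>
    rcases List.mem_cons.1 he with rfl | he
    · rfl
    · exact absurd (hw.mem_of_mem_I he hu) (List.nodup_cons.1 hnd).1

lemma even_countP_edgeCut_iff (h : G.IsWalk vs es) {X : Set V}
    [DecidablePred (· ∈ G.edgeCut X)] {a b : V} (ha : vs.head? = some a)
    (hb : vs.getLast? = some b) :
    Even (es.countP (· ∈ G.edgeCut X)) ↔ (a ∈ X ↔ b ∈ X) := by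
  induction h generalizing a with
  | nil v =>
    obtain rfl := Option.some_inj.1 ha
    obtain rfl := Option.some_inj.1 hb
    simp
  | @cons u w vs e es hI _ ih =>
    obtain rfl := Option.some_inj.1 ha
    have ih := ih rfl (by simpa using hb)
    have hcut := mem_edgeCut_iff hI X
    by_cases he : e ∈ G.edgeCut X
    · simp only [List.countP_cons, he, decide_true, if_true, Nat.even_add_one, ih]
      tauto
    · simp only [List.countP_cons, he, decide_false, Bool.false_eq_true, if_false, add_zero, ih]
      tauto

lemma restrict {F : Set E} (h : G.IsWalk vs es) (hF : ∀ e ∈ es, e ∈ F) :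
    (G.restrict F).IsWalk vs (es.pmap Subtype.mk hF) := by
  induction h with
  | nil v => exact .nil v
  | cons hI _ ih => exact .cons hI (ih _)

end IsWalk

structure Walk (G : Grapht V E) (a b : V) where
  verts : List V
  edges : List E
  isWalk : G.IsWalk verts edges
  head_eq : verts.head? = some a
  getLast_eq : verts.getLast? = some b

namespace Walk

variable {a b c v : V}

def ofEdge {e : E} (h : G.I e = s(a, b)) : G.Walk a b :=
  ⟨[a, b], [e], .cons h (.nil b), rfl, rfl⟩

lemma exists_verts_eq_cons (p : G.Walk a b) : ∃ l, p.verts = a :: l := by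
  have := p.head_eq
  cases h : p.verts <;> simp_all

def append (p : G.Walk a b) (q : G.Walk b c) : G.Walk a c where
  verts := p.verts ++ q.verts.tail
  edges := p.edges ++ q.edges
  isWalk := p.isWalk.append q.isWalk (p.getLast_eq.trans q.head_eq.symm)
  head_eq := by
    obtain ⟨l, hl⟩ := p.exists_verts_eq_cons
    simp [hl]
  getLast_eq := by
    obtain ⟨l, hl⟩ := q.exists_verts_eq_cons
    have := q.getLast_eq
    rw [hl] at this ⊢
    cases l with
    | nil =>
      obtain rfl : b = c := by simpa using this
      simpa using p.getLast_eq
    | cons x l => rwa [List.tail_cons, List.getLast?_append_of_ne_nil _ (by simp)]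

def reverse (p : G.Walk a b) : G.Walk b a :=
  ⟨p.verts.reverse, p.edges.reverse, p.isWalk.reverse, by simpa using p.getLast_eq,
    by simpa using p.head_eq⟩

lemma start_mem_verts (p : G.Walk a b) : a ∈ p.verts := List.mem_of_mem_head? p.head_eq

lemma end_mem_verts (p : G.Walk a b) : b ∈ p.verts := List.mem_of_getLast? p.getLast_eq

lemma mem_verts_of_mem_I (p : G.Walk a b) {e : E} (he : e ∈ p.edges) {x : V}
    (hx : x ∈ G.I e) : x ∈ p.verts :=
  p.isWalk.mem_of_mem_I he hx

lemma exists_mem_I (p : G.Walk a b) (hab : a ≠ b) (hv : v ∈ p.verts) :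
    ∃ e ∈ p.edges, v ∈ G.I e := by
  refine p.isWalk.exists_mem_I (fun hnil => hab ?_) hv
  have h := p.isWalk
  have ha := p.head_eq
  have hb := p.getLast_eq
  rw [hnil] at h
  generalize p.verts = vs at h ha hb
  cases h
  simp_all

lemma exists_prefix (p : G.Walk a b) (hv : v ∈ p.verts) :
    ∃ q : G.Walk a v, q.verts <+: p.verts ∧ q.edges ⊆ p.edges := by
  obtain ⟨l₁, l₂, hvs⟩ := List.append_of_mem hv
  obtain ⟨es₁, es₂, hes, h₁, -⟩ := p.isWalk.split hvs
  have ha := p.head_eq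
  rw [hvs] at ha
  refine ⟨⟨l₁ ++ [v], es₁, h₁, by cases l₁ <;> simp_all, by simp⟩, ⟨l₂, by simp [hvs]⟩, ?_⟩
  rw [hes]
  exact List.subset_append_left _ _

lemma exists_path (p : G.Walk a b) :
    ∃ P : G.Path, P.first = a ∧ P.last = b ∧ P.edges ⊆ p.edges := by
  obtain ⟨vs, es, h, hnd, hhead, hlast, hes⟩ := p.isWalk.exists_nodup
  exact ⟨⟨a, b, vs, es, h, hnd, hhead.trans p.head_eq, hlast.trans p.getLast_eq⟩, rfl, rfl, hes⟩

end Walk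

namespace Path

def toWalk (P : G.Path) : G.Walk P.first P.last :=
  ⟨P.verts, P.edges, P.isWalk, P.head_eq, P.getLast_eq⟩

lemma edges_nodup (P : G.Path) : P.edges.Nodup := P.isWalk.edges_nodup P.nodup

lemma isABPath (P : G.Path) : G.IsABPath {P.first} {P.last} P := by
  refine ⟨rfl, rfl, fun v hv hvX => ?_⟩
  obtain ⟨l, hl⟩ : ∃ l, P.verts = P.first :: l := P.toWalk.exists_verts_eq_cons
  have hnd := List.nodup_cons.1 (hl ▸ P.nodup)
  simp only [inner, hl, List.drop_one, List.tail_cons] at hv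
  have hne : l ≠ [] := by rintro rfl; simp at hv
  rcases hvX with rfl | rfl
  · exact hnd.1 (List.dropLast_subset _ hv)
  · have hlast : l.getLast hne = P.last := by
      have := P.getLast_eq
      rw [hl, List.getLast?_cons, List.getLast?_eq_some_getLast hne] at this
      simpa using this
    have hnd' := hnd.2
    rw [← List.dropLast_append_getLast hne, hlast] at hnd'
    exact List.disjoint_of_nodup_append hnd' hv (List.mem_singleton_self _)

lemma eq_of_first_mem_I (P : G.Path) {e e' : E} (he : e ∈ P.edges) (he' : e' ∈ P.edges)
    (h : P.first ∈ G.I e) (h' : P.first ∈ G.I e') : e = e' := by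
  obtain ⟨l, hl⟩ : ∃ l, P.verts = P.first :: l := P.toWalk.exists_verts_eq_cons
  have hw : G.IsWalk (P.first :: l) P.edges := hl ▸ P.isWalk
  have hnd : (P.first :: l).Nodup := hl ▸ P.nodup
  exact Option.some_inj.1 ((hw.head?_eq_of_mem_I hnd he h).symm.trans
    (hw.head?_eq_of_mem_I hnd he' h'))

lemma exists_prefix (P : G.Path) {y : V} (hy : y ∈ P.verts) (hyt : y ≠ P.last) :
    ∃ p : G.Walk P.first y, p.edges ⊆ P.edges ∧ P.last ∉ p.verts := by
  obtain ⟨p, ⟨l, hl⟩, hes⟩ := P.toWalk.exists_prefix hy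
  refine ⟨p, hes, fun ht => ?_⟩
  have hnd : (p.verts ++ l).Nodup := hl ▸ P.nodup
  have hlast : (p.verts ++ l).getLast? = some P.last := hl ▸ P.getLast_eq
  cases l using List.reverseRecOn with
  | nil =>
    rw [List.append_nil, p.getLast_eq] at hlast
    exact hyt (Option.some_inj.1 hlast)
  | append_singleton l x =>
    obtain rfl : x = P.last := by simpa using hlast
    exact List.disjoint_of_nodup_append hnd ht (by simp)

lemma exists_cycle (P : G.Path) {g : E} (hg : G.I g = s(P.last, P.first)) (hgP : g ∉ P.edges) :
    ∃ C : G.Cycle, C.edges = g :: P.edges :=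
  ⟨⟨P.last :: P.verts, g :: P.edges, P.isWalk.cons' hg P.head_eq,
    by simp [P.getLast_eq, List.getLast?_cons], List.cons_ne_nil _ _,
    List.nodup_cons.2 ⟨hgP, P.edges_nodup⟩, P.nodup⟩, rfl⟩

/-- Follow `P` up to `y`, then `W` to `u`, then `g` to the end of `P`, and shortcut. The new
path still starts with the first edge of `P`, since neither `W` nor `g` has an edge at the start
of `P`, and it ends with `g`, since neither the prefix nor `W` visits the end of `P`. -/
lemma exists_reroute (P : G.Path) {y u : V} {g : E} (hy : y ∈ P.verts) (hyt : y ≠ P.last)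
    (W : G.Walk y u) (hWt : P.last ∉ W.verts) (hWs : ∀ e ∈ W.edges, P.first ∉ G.I e)
    (hg : G.I g = s(u, P.last)) (hgs : P.first ∉ G.I g) :
    ∃ Q : G.Path, Q.first = P.first ∧ Q.last = P.last ∧ g ∈ Q.edges ∧
      (∀ e ∈ Q.edges, e ∈ P.edges ∨ e ∈ W.edges ∨ e = g) ∧
      ∀ e ∈ P.edges, P.first ∈ G.I e → e ∈ Q.edges := by
  have hst : P.first ≠ P.last := fun h => hgs (by simp [hg, h])
  obtain ⟨p, hpP, hpt⟩ := P.exists_prefix hy hyt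
  obtain ⟨Q, hQs, hQt, hQ⟩ := (p.append (W.append (Walk.ofEdge hg))).exists_path
  have hQ' : ∀ e ∈ Q.edges, e ∈ p.edges ∨ e ∈ W.edges ∨ e = g := by
    intro e he
    simpa [Walk.append, Walk.ofEdge, or_assoc] using hQ he
  have hQst : Q.first ≠ Q.last := hQs ▸ hQt ▸ hst
  obtain ⟨e₁, he₁, hte₁⟩ := Q.toWalk.exists_mem_I hQst Q.toWalk.end_mem_verts
  obtain ⟨e₀, he₀, hse₀⟩ := Q.toWalk.exists_mem_I hQst Q.toWalk.start_mem_verts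
  rw [hQt] at hte₁
  rw [hQs] at hse₀
  have hgQ : g ∈ Q.edges := by
    rcases hQ' e₁ he₁ with h | h | rfl
    · exact absurd (p.mem_verts_of_mem_I h hte₁) hpt
    · exact absurd (W.mem_verts_of_mem_I h hte₁) hWt
    · exact he₁
  refine ⟨Q, hQs, hQt, hgQ, fun e he => (hQ' e he).imp_left (hpP ·), fun e he hse => ?_⟩
  rcases hQ' e₀ he₀ with h | h | rfl
  · rwa [P.eq_of_first_mem_I he (hpP h) hse hse₀]
  · exact absurd hse₀ (hWs e₀ h)
  · exact absurd hse₀ hgs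

lemma even_countP_edgeCut_iff (P : G.Path) (X : Set V) [DecidablePred (· ∈ G.edgeCut X)] :
    Even (P.edges.countP (· ∈ G.edgeCut X)) ↔ (P.first ∈ X ↔ P.last ∈ X) :=
  P.isWalk.even_countP_edgeCut_iff P.head_eq P.getLast_eq

end Path

namespace Cycle

lemma even_countP_edgeCut (C : G.Cycle) (X : Set V) [DecidablePred (· ∈ G.edgeCut X)] :
    Even (C.edges.countP (· ∈ G.edgeCut X)) := by
  obtain ⟨a, ha⟩ : ∃ a, C.verts.head? = some a := by
    cases h : C.verts with
    | nil => exact absurd (h ▸ C.isWalk) (by rintro ⟨⟩)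
    | cons a _ => exact ⟨a, rfl⟩
  exact (C.isWalk.even_countP_edgeCut_iff ha (C.closed ▸ ha)).2 Iff.rfl

def restrict (C : G.Cycle) {F : Set E} (hF : ∀ e ∈ C.edges, e ∈ F) : (G.restrict F).Cycle where
  verts := C.verts
  edges := C.edges.pmap Subtype.mk hF
  isWalk := C.isWalk.restrict hF
  closed := C.closed
  nontrivial := by simpa using C.nontrivial
  edges_nodup := C.edges_nodup.pmap fun _ _ _ _ h => congrArg Subtype.val h
  tail_nodup := C.tail_nodup

lemma mem_edges_restrict {C : G.Cycle} {F : Set E} {hF : ∀ e ∈ C.edges, e ∈ F} {f : F} :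
    f ∈ (C.restrict hF).edges ↔ f.1 ∈ C.edges := by
  simp only [restrict, List.mem_pmap]
  exact ⟨fun ⟨_, h, hf⟩ => hf ▸ h, fun h => ⟨f.1, h, rfl⟩⟩

end Cycle

lemma exists_restrict_cycles {F : Set E} (Cs : Set G.Cycle) (hF : ∀ C ∈ Cs, ∀ e ∈ C.edges, e ∈ F)
    (hCs : Cs.Pairwise fun C D => ∀ e, e ∈ C.edges → e ∉ D.edges) :
    ∃ Cs' : Set (G.restrict F).Cycle, Cs'.Pairwise (fun c d => ∀ f, f ∈ c.edges → f ∉ d.edges) ∧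
      ∀ f : F, (∃ C ∈ Cs, f.1 ∈ C.edges) → ∃ c ∈ Cs', f ∈ c.edges := by
  refine ⟨Set.range fun C : Cs => C.1.restrict (hF C C.2), ?_, ?_⟩
  · rintro _ ⟨C, rfl⟩ _ ⟨D, rfl⟩ hne f hfC hfD
    have hCD : C.1 ≠ D.1 := fun h => hne (by rw [Subtype.ext h])
    exact hCs C.2 D.2 hCD f (Cycle.mem_edges_restrict.1 hfC) (Cycle.mem_edges_restrict.1 hfD)
  · rintro f ⟨C, hC, hf⟩
    exact ⟨_, ⟨⟨C, hC⟩, rfl⟩, Cycle.mem_edges_restrict.2 hf⟩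

variable (G) in
def ReachIn (S : Set E) (x y : V) : Prop := ∃ p : G.Walk x y, ∀ e ∈ p.edges, e ∈ S

namespace ReachIn

variable {S : Set E} {x y z : V}

lemma refl (x : V) : G.ReachIn S x x := ⟨⟨[x], [], .nil x, rfl, rfl⟩, by simp⟩

lemma step (h : G.ReachIn S x y) {e : E} (hI : G.I e = s(y, z)) (he : e ∈ S) :
    G.ReachIn S x z := by
  obtain ⟨p, hp⟩ := h
  refine ⟨p.append (.ofEdge hI), fun e' he' => ?_⟩
  simp only [Walk.append, Walk.ofEdge, List.mem_append, List.mem_singleton] at he'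
  rcases he' with he' | rfl
  exacts [hp e' he', he]

lemma of_mem_verts {p : G.Walk x y} (hp : ∀ e ∈ p.edges, e ∈ S) {v : V} (hv : v ∈ p.verts) :
    G.ReachIn S x v := by
  obtain ⟨q, -, hq⟩ := p.exists_prefix hv
  exact ⟨q, fun e he => hp e (hq he)⟩

end ReachIn

lemma InnerEulerian.even_countP_edgeCut (hG : G.InnerEulerian) {X : Set V}
    [DecidablePred (· ∈ G.edgeCut X)] (hX : Disjoint X G.T) {es : List E} (hes : es.Nodup)
    (hcut : G.edgeCut X ⊆ {e | e ∈ es}) : Even (es.countP (· ∈ G.edgeCut X)) := by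
  classical
  have heq : G.edgeCut X = ↑(es.filter (· ∈ G.edgeCut X)).toFinset := by
    ext e
    simp only [List.coe_toFinset, List.mem_filter, decide_eq_true_eq, Set.mem_ofPred_eq]
    exact ⟨fun h => ⟨hcut h, h⟩, And.right⟩
  rw [← Nat.not_odd_iff_even]
  intro hodd
  refine hG X hX ⟨heq ▸ Finset.finite_toSet _, ?_⟩
  rwa [heq, Set.ncard_coe_finset, List.toFinset_card_of_nodup (hes.filter _),
    ← List.countP_eq_length_filter]

variable {s t : V}

variable (G) in
/-- `L` is a linkage of `s` in `G − D`. -/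
def IsStLinkageAvoiding (s t : V) (D : Set E) (L : Set G.Path) : Prop :=
  G.EdgeDisjoint L ∧ (∀ P ∈ L, G.IsABPath {s} {t} P ∧ ∀ e ∈ P.edges, e ∉ D) ∧
    ∀ e ∈ G.edgeCut {s}, e ∉ D → ∃ P ∈ L, e ∈ P.edges

namespace IsStLinkageAvoiding

variable {D F : Set E} {L : Set G.Path}

lemma replace (hL : G.IsStLinkageAvoiding s t D L) {P : G.Path}
    (hPF : ∀ e ∈ P.edges, e ∈ G.edgeCut {s} → e ∈ F)
    (hLF : ∀ P' ∈ L, P' ≠ P → ∀ e ∈ P'.edges, e ∉ F) :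
    G.IsStLinkageAvoiding s t (D ∪ F) (L \ {P}) := by
  obtain ⟨hdisj, hpaths, hcover⟩ := hL
  refine ⟨hdisj.mono Set.sdiff_subset, fun P' hP' => ⟨(hpaths P' hP'.1).1, ?_⟩, ?_⟩
  · rintro e he (h | h)
    exacts [(hpaths P' hP'.1).2 e he h, hLF P' hP'.1 hP'.2 e he h]
  · intro e he heDF
    obtain ⟨P', hP', he'⟩ := hcover e he (fun h => heDF (Or.inl h))
    exact ⟨P', ⟨hP', fun (h : P' = P) => heDF (Or.inr (hPF e (h ▸ he') he))⟩, he'⟩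

lemma union (hL : G.IsStLinkageAvoiding s t D L) (hLF : ∀ P ∈ L, ∀ e ∈ P.edges, e ∉ F) :
    G.IsStLinkageAvoiding s t (D ∪ F) L := by
  obtain ⟨hdisj, hpaths, hcover⟩ := hL
  refine ⟨hdisj, fun P hP => ⟨(hpaths P hP).1, ?_⟩,
    fun e he heDF => hcover e he (fun h => heDF (Or.inl h))⟩
  rintro e he (h | h)
  exacts [(hpaths P hP).2 e he h, hLF P hP e he h]

end IsStLinkageAvoiding

structure LinkageState (G : Grapht V E) where
  paths : List G.Path
  cycles : List G.Cycle

namespace LinkageState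

variable {σ : LinkageState G}

def usedEdges (σ : LinkageState G) : List E :=
  σ.paths.flatMap Path.edges ++ σ.cycles.flatMap Cycle.edges

instance : Preorder (LinkageState G) where
  le σ τ := σ.paths ⊆ τ.paths ∧ σ.cycles ⊆ τ.cycles
  le_refl _ := ⟨List.Subset.refl _, List.Subset.refl _⟩
  le_trans _ _ _ h₁ h₂ := ⟨List.Subset.trans h₁.1 h₂.1, List.Subset.trans h₁.2 h₂.2⟩

lemma mem_usedEdges {e : E} :
    e ∈ σ.usedEdges ↔ (∃ P ∈ σ.paths, e ∈ P.edges) ∨ ∃ C ∈ σ.cycles, e ∈ C.edges := by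
  simp [usedEdges]

def addPath (σ : LinkageState G) (P : G.Path) : LinkageState G := ⟨P :: σ.paths, σ.cycles⟩

def addCycle (σ : LinkageState G) (C : G.Cycle) : LinkageState G := ⟨σ.paths, C :: σ.cycles⟩

lemma le_addPath (σ : LinkageState G) (P : G.Path) : σ ≤ σ.addPath P :=
  ⟨List.subset_cons_self _ _, List.Subset.refl _⟩

lemma le_addCycle (σ : LinkageState G) (C : G.Cycle) : σ ≤ σ.addCycle C :=
  ⟨List.Subset.refl _, List.subset_cons_self _ _⟩

lemma usedEdges_addPath (σ : LinkageState G) (P : G.Path) :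
    (σ.addPath P).usedEdges = P.edges ++ σ.usedEdges := by
  simp [usedEdges, addPath]

lemma usedEdges_addCycle_perm (σ : LinkageState G) (C : G.Cycle) :
    (σ.addCycle C).usedEdges.Perm (C.edges ++ σ.usedEdges) := by
  simpa [usedEdges, addCycle] using List.perm_append_comm_assoc _ _ _

def freeEdges (σ : LinkageState G) (L : Set G.Path) : Set E :=
  {e | e ∉ σ.usedEdges ∧ ∀ P ∈ L, e ∉ P.edges}

lemma notMem_edgeCut_of_mem_freeEdges {L : Set G.Path}
    (hL : G.IsStLinkageAvoiding s t {e | e ∈ σ.usedEdges} L) {e : E}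
    (he : e ∈ σ.freeEdges L) : e ∉ G.edgeCut {s} := fun hes => by
  obtain ⟨P, hP, heP⟩ := hL.2.2 e hes he.1
  exact he.2 P hP heP

structure Valid (s t : V) (σ : LinkageState G) : Prop where
  isABPath : ∀ P ∈ σ.paths, G.IsABPath {s} {t} P
  nodup : σ.usedEdges.Nodup
  cycles_avoid : ∀ C ∈ σ.cycles, ∀ e ∈ C.edges, e ∉ G.edgeCut {s}
  linked : ∃ L, G.IsStLinkageAvoiding s t {e | e ∈ σ.usedEdges} L

lemma valid_empty (hs : G.StLinked s t) : (⟨[], []⟩ : LinkageState G).Valid s t := by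
  obtain ⟨L, hdisj, hAB, hcover⟩ := hs
  exact ⟨by simp, by simp [usedEdges], by simp,
    ⟨L, hdisj, fun P hP => ⟨hAB P hP, by simp [usedEdges]⟩, fun e he _ => hcover e he⟩⟩

namespace Valid

lemma paths_disjoint (hσ : σ.Valid s t) {P Q : G.Path} (hP : P ∈ σ.paths) (hQ : Q ∈ σ.paths)
    (hne : P ≠ Q) : ∀ e, e ∈ P.edges → e ∉ Q.edges :=
  fun _ heP heQ => hσ.nodup.of_append_left.disjoint_of_flatMap hP hQ hne heP heQ

lemma cycles_disjoint (hσ : σ.Valid s t) {C D : G.Cycle} (hC : C ∈ σ.cycles)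
    (hD : D ∈ σ.cycles) (hne : C ≠ D) : ∀ e, e ∈ C.edges → e ∉ D.edges :=
  fun _ heC heD => hσ.nodup.of_append_right.disjoint_of_flatMap hC hD hne heC heD

lemma path_cycle_disjoint (hσ : σ.Valid s t) {P : G.Path} {C : G.Cycle} (hP : P ∈ σ.paths)
    (hC : C ∈ σ.cycles) : ∀ e ∈ P.edges, e ∉ C.edges :=
  fun _ heP heC => List.disjoint_of_nodup_append hσ.nodup (List.mem_flatMap.2 ⟨P, hP, heP⟩)
    (List.mem_flatMap.2 ⟨C, hC, heC⟩)

lemma even_countP_usedEdges (hσ : σ.Valid s t) {X : Set V} [DecidablePred (· ∈ G.edgeCut X)]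
    (hsX : s ∉ X) (htX : t ∉ X) : Even (σ.usedEdges.countP (· ∈ G.edgeCut X)) := by
  rw [usedEdges, List.countP_append]
  refine (List.even_countP_flatMap fun P hP => ?_).add
    (List.even_countP_flatMap fun C _ => C.even_countP_edgeCut X)
  obtain ⟨hs, ht, -⟩ := hσ.isABPath P hP
  rw [P.even_countP_edgeCut_iff, Set.mem_singleton_iff.1 hs, Set.mem_singleton_iff.1 ht]
  exact iff_of_false hsX htX

lemma not_edgeCut_subset (hG : G.InnerEulerian) (hT : G.T = {s, t}) (hσ : σ.Valid s t)
    {X : Set V} (hsX : s ∉ X) (htX : t ∉ X) {g : E} (hg : g ∈ G.edgeCut X)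
    (hgσ : g ∉ σ.usedEdges) : ¬ G.edgeCut X ⊆ insert g {e | e ∈ σ.usedEdges} := by
  classical
  intro hcut
  have hX : Disjoint X G.T := by
    rw [hT, Set.disjoint_insert_right, Set.disjoint_singleton_right]
    exact ⟨hsX, htX⟩
  have heven := hG.even_countP_edgeCut hX (List.nodup_cons.2 ⟨hgσ, hσ.nodup⟩)
    fun e he => by simpa using hcut he
  rw [List.countP_cons_of_pos (by simpa using hg), Nat.even_add_one] at heven
  exact heven (hσ.even_countP_usedEdges hsX htX)

section Step

variable {L : Set G.Path} (hσ : σ.Valid s t)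
  (hL : G.IsStLinkageAvoiding s t {e | e ∈ σ.usedEdges} L)
include hσ hL

lemma addPath {P Q : G.Path} (hQ : G.IsABPath {s} {t} Q)
    (hQσ : ∀ e ∈ Q.edges, e ∉ σ.usedEdges) (hPQ : ∀ e ∈ P.edges, e ∈ G.edgeCut {s} → e ∈ Q.edges)
    (hQL : ∀ P' ∈ L, P' ≠ P → ∀ e ∈ P'.edges, e ∉ Q.edges) : (σ.addPath Q).Valid s t where
  isABPath := List.forall_mem_cons.2 ⟨hQ, hσ.isABPath⟩
  nodup := by
    rw [usedEdges_addPath]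
    exact List.nodup_append.2 ⟨Q.edges_nodup, hσ.nodup, fun a ha _ hb hab => hQσ a ha (hab ▸ hb)⟩
  cycles_avoid := hσ.cycles_avoid
  linked := by
    refine ⟨L \ {P}, ?_⟩
    have hused : {e | e ∈ (σ.addPath Q).usedEdges} =
        {e | e ∈ σ.usedEdges} ∪ {e | e ∈ Q.edges} := by
      ext
      simp [usedEdges_addPath, or_comm]
    rw [hused]
    exact hL.replace hPQ hQL

lemma addCycle {C : G.Cycle} (hC : ∀ e ∈ C.edges, e ∈ σ.freeEdges L) :
    (σ.addCycle C).Valid s t where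
  isABPath := hσ.isABPath
  nodup := (usedEdges_addCycle_perm σ C).nodup_iff.2 <| List.nodup_append.2
    ⟨C.edges_nodup, hσ.nodup, fun a ha _ hb hab => (hC a ha).1 (hab ▸ hb)⟩
  cycles_avoid := List.forall_mem_cons.2
    ⟨fun e he => notMem_edgeCut_of_mem_freeEdges hL (hC e he), hσ.cycles_avoid⟩
  linked := by
    refine ⟨L, ?_⟩
    have hused : {e | e ∈ (σ.addCycle C).usedEdges} =
        {e | e ∈ σ.usedEdges} ∪ {e | e ∈ C.edges} := by
      ext
      simp [(usedEdges_addCycle_perm σ C).mem_iff, or_comm]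
    rw [hused]
    exact hL.union fun P hP e he heC => (hC e heC).2 P hP he

lemma exists_le_of_cycle {g : E} {u : V} (hg : g ∈ σ.freeEdges L) (hIg : G.I g = s(t, u))
    (p : G.Walk u t) (hp : ∀ e ∈ p.edges, e ∈ σ.freeEdges L \ {g}) :
    ∃ τ, σ ≤ τ ∧ τ.Valid s t ∧ g ∈ τ.usedEdges := by
  obtain ⟨Q, hQu, hQt, hQ⟩ := p.exists_path
  obtain ⟨C, hC⟩ := Q.exists_cycle (by rw [hQu, hQt]; exact hIg) fun h => (hp g (hQ h)).2 rfl
  have hCfree : ∀ e ∈ C.edges, e ∈ σ.freeEdges L := by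
    rw [hC]
    intro e he
    rcases List.mem_cons.1 he with rfl | he
    exacts [hg, (hp e (hQ he)).1]
  refine ⟨σ.addCycle C, σ.le_addCycle C, hσ.addCycle hL hCfree, ?_⟩
  rw [(usedEdges_addCycle_perm σ C).mem_iff, hC]
  exact List.mem_append_left _ List.mem_cons_self

lemma exists_le_of_reroute {g : E} {u y : V} {P : G.Path} (hP : P ∈ L) (hy : y ∈ P.verts)
    (hg : g ∈ σ.freeEdges L) (hIg : G.I g = s(u, t)) (p : G.Walk u y)
    (hp : ∀ e ∈ p.edges, e ∈ σ.freeEdges L) (hpt : t ∉ p.verts) :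
    ∃ τ, σ ≤ τ ∧ τ.Valid s t ∧ g ∈ τ.usedEdges := by
  obtain ⟨⟨hPs, hPt, -⟩, hPσ⟩ := hL.2.1 P hP
  rw [Set.mem_singleton_iff] at hPs hPt
  have hfree_s : ∀ e ∈ σ.freeEdges L, P.first ∉ G.I e := fun e he h =>
    notMem_edgeCut_of_mem_freeEdges hL he (mem_edgeCut_singleton.2 (hPs ▸ h))
  obtain ⟨Q, hQs, hQt, hgQ, hQ, hPQ⟩ := P.exists_reroute hy
    (fun h => hpt (hPt ▸ h ▸ p.end_mem_verts)) p.reverse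
    (by simpa [Walk.reverse, hPt] using hpt)
    (fun e he => hfree_s e (hp e (by simpa [Walk.reverse] using he))) (hPt ▸ hIg) (hfree_s g hg)
  have hQfree : ∀ e ∈ Q.edges, e ∉ σ.usedEdges ∧ ∀ P' ∈ L, P' ≠ P → e ∉ P'.edges := by
    intro e he
    rcases hQ e he with h | h | rfl
    · exact ⟨hPσ e h, fun P' hP' hne => hL.1 hP hP' hne.symm e h⟩
    · have := hp e (by simpa [Walk.reverse] using h)
      exact ⟨this.1, fun P' hP' _ => this.2 P' hP'⟩
    · exact ⟨hg.1, fun P' hP' _ => hg.2 P' hP'⟩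
  refine ⟨σ.addPath Q, σ.le_addPath Q, hσ.addPath hL ?_ (fun e he => (hQfree e he).1)
    (fun e he hes => hPQ e he (hPs ▸ mem_edgeCut_singleton.1 hes))
    (fun P' hP' hne e he heQ => (hQfree e heQ).2 P' hP' hne he), ?_⟩
  · simpa [hQs, hQt, hPs, hPt] using Q.isABPath
  · rw [usedEdges_addPath]
    exact List.mem_append_left _ hgQ

lemma exists_le_of_mem_freeEdges (hG : G.InnerEulerian) (hT : G.T = {s, t}) {g : E}
    (hg : g ∈ σ.freeEdges L) (hgt : g ∈ G.edgeCut {t}) :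
    ∃ τ, σ ≤ τ ∧ τ.Valid s t ∧ g ∈ τ.usedEdges := by
  obtain ⟨u, hIg⟩ : ∃ u, G.I g = s(u, t) := by
    have ht := mem_edgeCut_singleton.1 hgt
    exact ⟨Sym2.Mem.other ht, by rw [Sym2.eq_swap]; exact (Sym2.other_spec ht).symm⟩
  set X : Set V := {v | G.ReachIn (σ.freeEdges L \ {g}) u v}
  have hsX : s ∉ X := by
    rintro ⟨p, hp⟩
    have hus : u ≠ s := by
      rintro rfl
      exact notMem_edgeCut_of_mem_freeEdges hL hg (mem_edgeCut_singleton.2 (by simp [hIg]))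
    obtain ⟨e, he, hse⟩ := p.exists_mem_I hus p.end_mem_verts
    exact notMem_edgeCut_of_mem_freeEdges hL (hp e he).1 (mem_edgeCut_singleton.2 hse)
  by_cases htX : t ∈ X
  · obtain ⟨p, hp⟩ := htX
    exact hσ.exists_le_of_cycle hL hg (by rw [hIg, Sym2.eq_swap]) p hp
  by_cases hPX : ∃ P ∈ L, ∃ y ∈ P.verts, y ∈ X
  · obtain ⟨P, hP, y, hy, p, hp⟩ := hPX
    exact hσ.exists_le_of_reroute hL hP hy hg hIg p (fun e he => (hp e he).1)
      fun ht => htX (ReachIn.of_mem_verts hp ht)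
  refine absurd (fun e he => ?_) (hσ.not_edgeCut_subset hG hT hsX htX
    ⟨u, t, hIg, ReachIn.refl u, htX⟩ hg.1)
  obtain ⟨x, w, hIe, hx, hw⟩ := he
  by_contra hne
  simp only [Set.mem_insert_iff, Set.mem_ofPred_eq, not_or] at hne
  have heL : ∀ P ∈ L, e ∉ P.edges := fun P hP heP =>
    hPX ⟨P, hP, x, P.isWalk.mem_of_mem_I heP (by simp [hIe]), hx⟩
  exact hw (ReachIn.step hx hIe ⟨⟨hne.2, heL⟩, hne.1⟩)

end Step

lemma exists_le_mem_usedEdges (hG : G.InnerEulerian) (hT : G.T = {s, t}) (hσ : σ.Valid s t)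
    {g : E} (hg : g ∈ G.edgeCut {s} ∨ g ∈ G.edgeCut {t}) :
    ∃ τ, σ ≤ τ ∧ τ.Valid s t ∧ g ∈ τ.usedEdges := by
  obtain ⟨L, hL⟩ := hσ.linked
  by_cases hgσ : g ∈ σ.usedEdges
  · exact ⟨σ, le_rfl, hσ, hgσ⟩
  by_cases hgL : ∃ P ∈ L, g ∈ P.edges
  · obtain ⟨P, hP, hgP⟩ := hgL
    refine ⟨σ.addPath P, σ.le_addPath P, hσ.addPath hL (hL.2.1 P hP).1 (hL.2.1 P hP).2
      (fun e he _ => he) (fun P' hP' hne e he heP => hL.1 hP hP' hne.symm e heP he), ?_⟩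
    rw [usedEdges_addPath]
    exact List.mem_append_left _ hgP
  have hg' : g ∈ σ.freeEdges L := ⟨hgσ, fun P hP hgP => hgL ⟨P, hP, hgP⟩⟩
  exact hσ.exists_le_of_mem_freeEdges hL hG hT hg'
    (hg.resolve_left (notMem_edgeCut_of_mem_freeEdges hL hg'))

end Valid

end LinkageState

open LinkageState in
lemma exists_valid_chain [Countable E] (hG : G.InnerEulerian) (hT : G.T = {s, t})
    (hs : G.StLinked s t) :
    ∃ f : ℕ → LinkageState G, Monotone f ∧ (∀ n, (f n).Valid s t) ∧
      ∀ e, e ∈ G.edgeCut {s} ∨ e ∈ G.edgeCut {t} → ∃ n, e ∈ (f n).usedEdges := by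
  obtain ⟨en, hen⟩ := exists_surjective_nat (Option E)
  have hstep : ∀ (σ : {σ : LinkageState G // σ.Valid s t}) (o : Option E),
      ∃ τ : {σ : LinkageState G // σ.Valid s t}, σ.1 ≤ τ.1 ∧
        ∀ e ∈ o, e ∈ G.edgeCut {s} ∨ e ∈ G.edgeCut {t} → e ∈ τ.1.usedEdges := by
    rintro ⟨σ, hσ⟩ (_ | g)
    · exact ⟨⟨σ, hσ⟩, le_rfl, by simp⟩
    by_cases hg : g ∈ G.edgeCut {s} ∨ g ∈ G.edgeCut {t}
    · obtain ⟨τ, hστ, hτ, hgτ⟩ := hσ.exists_le_mem_usedEdges hG hT hg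
      exact ⟨⟨τ, hτ⟩, hστ, by simpa using fun _ => hgτ⟩
    · exact ⟨⟨σ, hσ⟩, le_rfl, by simp_all⟩
  choose next hle hnext using hstep
  let f : ℕ → {σ : LinkageState G // σ.Valid s t} :=
    fun n => Nat.rec ⟨⟨[], []⟩, valid_empty hs⟩ (fun n σ => next σ (en n)) n
  refine ⟨fun n => (f n).1, monotone_nat_of_le_succ fun n => hle (f n) (en n),
    fun n => (f n).2, fun e he => ?_⟩
  obtain ⟨n, hn⟩ := hen (some e)
  exact ⟨n + 1, hnext (f n) (en n) e hn he⟩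

lemma exists_linkage_and_cycles [Countable E] (hG : G.InnerEulerian) (hT : G.T = {s, t})
    (hs : G.StLinked s t) :
    ∃ Ps : Set G.Path, ∃ Cs : Set G.Cycle, G.IsStLinkage s t Ps ∧
      Cs.Pairwise (fun C D => ∀ e, e ∈ C.edges → e ∉ D.edges) ∧
      (∀ C ∈ Cs, ∀ e ∈ C.edges, e ∈ (G.sysEdges Ps)ᶜ) ∧
      ∀ e ∈ G.edgeCut {t}, e ∉ G.sysEdges Ps → ∃ C ∈ Cs, e ∈ C.edges := by
  obtain ⟨f, hmono, hvalid, hcover⟩ := exists_valid_chain hG hT hs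
  have hjoint : ∀ m n, ∃ N, f m ≤ f N ∧ f n ≤ f N :=
    fun m n => ⟨max m n, hmono (le_max_left m n), hmono (le_max_right m n)⟩
  have hsys : ∀ {e}, e ∈ G.sysEdges {P | ∃ n, P ∈ (f n).paths} ↔
      ∃ n, ∃ P ∈ (f n).paths, e ∈ P.edges := by
    simp only [sysEdges, Path.edgeSet, Set.mem_iUnion, Set.mem_ofPred_eq, exists_prop]
    exact ⟨fun ⟨P, ⟨n, hP⟩, heP⟩ => ⟨n, P, hP, heP⟩, fun ⟨n, P, hP, heP⟩ => ⟨P, ⟨n, hP⟩, heP⟩⟩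
  refine ⟨{P | ∃ n, P ∈ (f n).paths}, {C | ∃ n, C ∈ (f n).cycles}, ⟨?_, ?_, ?_⟩, ?_, ?_, ?_⟩
  · rintro P ⟨m, hP⟩ Q ⟨n, hQ⟩ hne
    obtain ⟨N, hmN, hnN⟩ := hjoint m n
    exact (hvalid N).paths_disjoint (hmN.1 hP) (hnN.1 hQ) hne
  · rintro P ⟨n, hP⟩
    exact (hvalid n).isABPath P hP
  · intro e he
    obtain ⟨n, hn⟩ := hcover e (Or.inl he)
    rcases LinkageState.mem_usedEdges.1 hn with ⟨P, hP, heP⟩ | ⟨C, hC, heC⟩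
    · exact ⟨P, ⟨n, hP⟩, heP⟩
    · exact absurd he ((hvalid n).cycles_avoid C hC e heC)
  · rintro C ⟨m, hC⟩ D ⟨n, hD⟩ hne
    obtain ⟨N, hmN, hnN⟩ := hjoint m n
    exact (hvalid N).cycles_disjoint (hmN.2 hC) (hnN.2 hD) hne
  · rintro C ⟨m, hC⟩ e heC hePs
    obtain ⟨n, P, hP, heP⟩ := hsys.1 hePs
    obtain ⟨N, hnN, hmN⟩ := hjoint n m
    exact (hvalid N).path_cycle_disjoint (hnN.1 hP) (hmN.2 hC) e heP heC
  · intro e he hePs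
    obtain ⟨n, hn⟩ := hcover e (Or.inr he)
    rcases LinkageState.mem_usedEdges.1 hn with ⟨P, hP, heP⟩ | ⟨C, hC, heC⟩
    · exact absurd (hsys.2 ⟨n, P, hP, heP⟩) hePs
    · exact ⟨C, ⟨n, hC⟩, heC⟩

end Grapht

theorem linkage_with_cycles_general {V : Type u} {E : Type v} [Countable E] (G : Grapht V E)
    (s t : V) (hT : G.T = {s, t})
    (hG : G.InnerEulerian) (hs : G.StLinked s t) :
    ∃ Ps : Set G.Path, G.IsStLinkage s t Ps ∧
      ∃ Cs : Set (G.restrict (G.sysEdges Ps)ᶜ).Cycle,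
        (∀ c ∈ Cs, ∀ c' ∈ Cs, c ≠ c' → ∀ f, f ∈ c.edges → f ∉ c'.edges) ∧
        ∀ e ∈ (G.restrict (G.sysEdges Ps)ᶜ).edgeCut {t}, ∃ c ∈ Cs, e ∈ c.edges := by
  obtain ⟨Ps, Cs, hPs, hCs, hCsPs, hcover⟩ := Grapht.exists_linkage_and_cycles hG hT hs
  obtain ⟨Cs', hCs', hcover'⟩ := Grapht.exists_restrict_cycles Cs hCsPs hCs
  exact ⟨Ps, hPs, Cs', hCs', fun e he => hcover' e (hcover e.1 he e.2)⟩

/-- In a countable inner Eulerian two-terminal grapht in which `s` is linked, there is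
a linkage `Ps` of `s` together with a family of pairwise edge-disjoint cycles in
`G − E(Ps)` covering `δ_{G−E(Ps)}(t)`. -/
theorem linkage_with_cycles {V : Type u} {E : Type v} [Countable E] (G : Grapht V E)
    (s t : V) (hst : s ≠ t) (hT : G.T = {s, t})
    (hG : G.InnerEulerian) (hs : G.StLinked s t) :
    ∃ Ps : Set G.Path, G.IsStLinkage s t Ps ∧
      ∃ Cs : Set (G.restrict (G.sysEdges Ps)ᶜ).Cycle,
        (∀ c ∈ Cs, ∀ c' ∈ Cs, c ≠ c' → ∀ f, f ∈ c.edges → f ∉ c'.edges) ∧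
        ∀ e ∈ (G.restrict (G.sysEdges Ps)ᶜ).edgeCut {t}, ∃ c ∈ Cs, e ∈ c.edges :=
  linkage_with_cycles_general G s t hT hG hs
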